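/- Let Ω ⊆ ℂ be open and let F : Ω → ℂ be holomorphic with F'(z) ≠ 0 and |F(z)| < 1 for all z ∈ Ω. Then the function u(z) = ln( 4 |F'(z)|² / (1 − |F(z)|²)² ) satisfies the elliptic Liouville equation Δu = 2 e^{u} on Ω, where Δ is the Laplacian on ℝ² identified with ℂ. -/

import Mathlib

/-!
For `f` holomorphic and `p` a `C²` function of one real variable,
`Δ (p ∘ ‖f‖²) = 4 ‖f'‖² (p'(‖f‖²) + ‖f‖² p''(‖f‖²))`, because `∂ᵥ‖f‖² = 2 ⟪f, f' v⟫` and the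
`⟪f, f'' v²⟫` terms cancel between `v = 1` and `v = I`. Taking `p = log (1 - ·)` gives
`Δ log (1 - ‖F‖²) = -4 ‖F'‖² / (1 - ‖F‖²)²`, while `log ‖F'‖` is harmonic; hence
`u = log 4 + 2 log ‖F'‖ - 2 log (1 - ‖F‖²)` has `Δu = 8 ‖F'‖² / (1 - ‖F‖²)² = 2 eᵘ`.
-/

open Complex Filter Topology InnerProductSpace Laplacian RealInnerProductSpace

theorem iteratedFDeriv_two_apply_self {E F : Type*} [NormedAddCommGroup E] [NormedSpace ℝ E]
    [NormedAddCommGroup F] [NormedSpace ℝ F] {u : E → F} {z : E}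
    (hu : DifferentiableAt ℝ (fderiv ℝ u) z) (v : E) :
    iteratedFDeriv ℝ 2 u z ![v, v] = fderiv ℝ (fun w => fderiv ℝ u w v) z v := by
  rw [iteratedFDeriv_two_apply, fderiv_clm_apply hu (differentiableAt_const v)]
  simp

theorem ContDiffAt.laplacian_eq_fderiv_fderiv {F : Type*} [NormedAddCommGroup F] [NormedSpace ℝ F]
    {u : ℂ → F} {z : ℂ} (hu : ContDiffAt ℝ 2 u z) :
    Δ u z = fderiv ℝ (fun w => fderiv ℝ u w 1) z 1 + fderiv ℝ (fun w => fderiv ℝ u w I) z I := by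
  have hu' : DifferentiableAt ℝ (fderiv ℝ u) z :=
    (hu.fderiv_right (by norm_num)).differentiableAt one_ne_zero
  simp only [laplacian_eq_iteratedFDeriv_complexPlane, iteratedFDeriv_two_apply_self hu']

theorem ContDiffAt.differentiableAt_fderiv_apply {E F : Type*} [NormedAddCommGroup E]
    [NormedSpace ℝ E] [NormedAddCommGroup F] [NormedSpace ℝ F] {u : E → F} {z : E}
    (hu : ContDiffAt ℝ 2 u z) (v : E) :
    DifferentiableAt ℝ (fun w => fderiv ℝ u w v) z :=
  ((hu.fderiv_right (by norm_num)).differentiableAt one_ne_zero).clm_apply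
    (differentiableAt_const v)

theorem fderiv_fderiv_comp_apply {E : Type*} [NormedAddCommGroup E] [NormedSpace ℝ E]
    {g : E → ℝ} {p : ℝ → ℝ} {z : E} (hg : ContDiffAt ℝ 2 g z) (hp : ContDiffAt ℝ 2 p (g z))
    (v : E) :
    fderiv ℝ (fun w => fderiv ℝ (fun w => p (g w)) w v) z v
      = deriv (deriv p) (g z) * fderiv ℝ g z v ^ 2
        + deriv p (g z) * fderiv ℝ (fun w => fderiv ℝ g w v) z v := by
  have hchain : (fun w => fderiv ℝ (fun w => p (g w)) w v)
      =ᶠ[𝓝 z] fun w => deriv p (g w) * fderiv ℝ g w v := by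
    filter_upwards [hg.eventually (by simp), hg.continuousAt.eventually (hp.eventually (by simp))]
      with w hgw hpw
    have hpg : HasFDerivAt (fun w => p (g w)) (deriv p (g w) • fderiv ℝ g w) w :=
      (hpw.differentiableAt two_ne_zero).hasDerivAt.comp_hasFDerivAt w
        (hgw.differentiableAt two_ne_zero).hasFDerivAt
    simp [hpg.fderiv]
  have hp' : HasFDerivAt (fun w => deriv p (g w)) (deriv (deriv p) (g z) • fderiv ℝ g z) z :=
    (hp.differentiableAt_fderiv_apply 1).hasDerivAt.comp_hasFDerivAt z
      (hg.differentiableAt two_ne_zero).hasFDerivAt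
  rw [hchain.fderiv_eq, (hp'.fun_mul (hg.differentiableAt_fderiv_apply v).hasFDerivAt).fderiv]
  simp only [add_apply, smul_apply, smul_eq_mul]
  ring

theorem DifferentiableAt.fderiv_norm_sq_apply {f : ℂ → ℂ} {w : ℂ} (hf : DifferentiableAt ℂ f w)
    (v : ℂ) :
    fderiv ℝ (fun w => ‖f w‖ ^ 2) w v = 2 * ⟪f w, deriv f w * v⟫_ℝ := by
  rw [(hf.hasDerivAt.hasFDerivAt.restrictScalars ℝ).norm_sq.fderiv]
  simp only [smul_apply, ContinuousLinearMap.comp_apply,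
    ContinuousLinearMap.coe_restrictScalars', ContinuousLinearMap.toSpanSingleton_apply,
    coe_innerSL_apply, smul_eq_mul, mul_comm v, nsmul_eq_mul, Nat.cast_ofNat]

theorem AnalyticAt.fderiv_fderiv_norm_sq_apply {f : ℂ → ℂ} {z : ℂ} (hf : AnalyticAt ℂ f z)
    (v : ℂ) :
    fderiv ℝ (fun w => fderiv ℝ (fun w => ‖f w‖ ^ 2) w v) z v
      = 2 * ‖deriv f z * v‖ ^ 2 + 2 * ⟪f z, deriv (deriv f) z * v ^ 2⟫_ℝ := by
  have hfg : (fun w => fderiv ℝ (fun w => ‖f w‖ ^ 2) w v)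
      =ᶠ[𝓝 z] fun w => 2 * ⟪f w, deriv f w * v⟫_ℝ := by
    filter_upwards [hf.eventually_analyticAt] with w hw
    exact hw.differentiableAt.fderiv_norm_sq_apply v
  have h1 : HasFDerivAt f ((fderiv ℂ f z).restrictScalars ℝ) z :=
    hf.differentiableAt.hasFDerivAt.restrictScalars ℝ
  have h2 : HasFDerivAt (fun w => deriv f w * v) _ z :=
    (hf.deriv.differentiableAt.hasFDerivAt.restrictScalars ℝ).mul_const v
  rw [hfg.fderiv_eq, ((h1.inner ℝ h2).const_mul 2).fderiv]
  simp only [smul_apply, ContinuousLinearMap.comp_apply,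
    ContinuousLinearMap.prod_apply, ContinuousLinearMap.coe_restrictScalars',
    fderiv_eq_smul_deriv, smul_eq_mul, fderivInnerCLM_apply]
  rw [show v * (v * deriv (deriv f) z) = deriv (deriv f) z * v ^ 2 by ring,
    mul_comm v (deriv f z), real_inner_self_eq_norm_sq]
  ring

theorem AnalyticAt.laplacian_comp_norm_sq {f : ℂ → ℂ} {p : ℝ → ℝ} {z : ℂ}
    (hf : AnalyticAt ℂ f z) (hp : ContDiffAt ℝ 2 p (‖f z‖ ^ 2)) :
    Δ (fun w => p (‖f w‖ ^ 2)) z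
      = 4 * ‖deriv f z‖ ^ 2
          * (deriv p (‖f z‖ ^ 2) + ‖f z‖ ^ 2 * deriv (deriv p) (‖f z‖ ^ 2)) := by
  have hg : ContDiffAt ℝ 2 (fun w => ‖f w‖ ^ 2) z :=
    (hf.contDiffAt.restrict_scalars ℝ).norm_sq ℝ
  have hpg : ContDiffAt ℝ 2 (fun w => p (‖f w‖ ^ 2)) z := hp.comp z hg
  rw [hpg.laplacian_eq_fderiv_fderiv, fderiv_fderiv_comp_apply hg hp,
    fderiv_fderiv_comp_apply hg hp, hf.fderiv_fderiv_norm_sq_apply,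
    hf.fderiv_fderiv_norm_sq_apply, hf.differentiableAt.fderiv_norm_sq_apply,
    hf.differentiableAt.fderiv_norm_sq_apply]
  generalize deriv p (‖f z‖ ^ 2) = p₁, deriv (deriv p) (‖f z‖ ^ 2) = p₂
  simp only [Complex.inner, Complex.sq_norm, normSq_apply, mul_re, mul_im, conj_re, conj_im,
    one_pow, I_sq, neg_re, neg_im, one_re, one_im, I_re, I_im]
  ring

theorem AnalyticAt.laplacian_log_one_sub_norm_sq {f : ℂ → ℂ} {z : ℂ} (hf : AnalyticAt ℂ f z)
    (hfz : ‖f z‖ < 1) :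
    Δ (fun w => Real.log (1 - ‖f w‖ ^ 2)) z = -(4 * ‖deriv f z‖ ^ 2 / (1 - ‖f z‖ ^ 2) ^ 2) := by
  have hpos : 0 < 1 - ‖f z‖ ^ 2 := sub_pos.2 ((sq_lt_one_iff₀ (norm_nonneg _)).2 hfz)
  have hp' : deriv (fun s => Real.log (1 - s)) = fun s => -(1 - s)⁻¹ := by
    funext s
    rw [deriv_comp_const_sub, Real.deriv_log]
  have hp'' : deriv (fun s : ℝ => -(1 - s)⁻¹) = fun s => -((1 - s) ^ 2)⁻¹ := by
    funext s
    rw [deriv_comp_const_sub (f := fun y => -y⁻¹), deriv.fun_neg, deriv_inv, neg_neg]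
  rw [hf.laplacian_comp_norm_sq (p := fun s => Real.log (1 - s))
      (contDiffAt_const.sub contDiffAt_id |>.log hpos.ne'), hp', hp'']
  field_simp
  ring

theorem Real.log_four_mul_sq_div_sq {a b : ℝ} (ha : a ≠ 0) (hb : 1 - b ≠ 0) :
    Real.log (4 * a ^ 2 / (1 - b) ^ 2) = Real.log 4 + 2 * Real.log a - 2 * Real.log (1 - b) := by
  rw [Real.log_div (by positivity) (pow_ne_zero 2 hb), Real.log_mul (by norm_num) (by positivity),
    Real.log_pow, Real.log_pow]
  push_cast
  ring

/-- Liouville's formula in the elliptic setting, hyperbolic-metric sign: if `F` is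
holomorphic on an open set `Ω ⊆ ℂ` with `F' ≠ 0` and `|F| < 1`, then
`u = ln( 4|F'|² / (1-|F|²)² )` satisfies `Δu = 2 e^u` on `Ω`,
where the Laplacian is the sum of the second directional derivatives in the
directions `1` and `I` of `ℂ ≅ ℝ²`. -/
theorem liouville_elliptic_solution_pos
    (Ω : Set ℂ) (hΩ : IsOpen Ω)
    (F : ℂ → ℂ) (hF : DifferentiableOn ℂ F Ω)
    (hF' : ∀ z ∈ Ω, deriv F z ≠ 0)
    (hFlt : ∀ z ∈ Ω, ‖F z‖ < 1)
    (u : ℂ → ℝ)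
    (hu : ∀ z, u z =
      Real.log (4 * ‖deriv F z‖ ^ 2 / (1 - ‖F z‖ ^ 2) ^ 2)) :
    ∀ z ∈ Ω,
      fderiv ℝ (fun w => fderiv ℝ u w 1) z 1
        + fderiv ℝ (fun w => fderiv ℝ u w Complex.I) z Complex.I
      = 2 * Real.exp (u z) := by
  intro z hz
  have hFa : AnalyticAt ℂ F z := hF.analyticAt (hΩ.mem_nhds hz)
  have hlt : ∀ w ∈ Ω, 0 < 1 - ‖F w‖ ^ 2 := fun w hw =>
    sub_pos.2 ((sq_lt_one_iff₀ (norm_nonneg _)).2 (hFlt w hw))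
  set h : ℂ → ℝ := (fun _ => Real.log 4) + (2 : ℝ) • fun w => Real.log ‖deriv F w‖
  set g : ℂ → ℝ := fun w => Real.log (1 - ‖F w‖ ^ 2)
  have hh : HarmonicAt h z :=
    (harmonicAt_const _).add (hFa.deriv.harmonicAt_log_norm (hF' z hz)).const_smul
  have hg : ContDiffAt ℝ 2 g z :=
    contDiffAt_const.sub ((hFa.contDiffAt.restrict_scalars ℝ).norm_sq ℝ) |>.log (hlt z hz).ne'
  have hg' : ContDiffAt ℝ 2 ((-2 : ℝ) • g) z := hg.const_smul (-2 : ℝ)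
  have hu_eq : u =ᶠ[𝓝 z] h + (-2 : ℝ) • g := by
    filter_upwards [hΩ.mem_nhds hz] with w hw
    rw [hu, Real.log_four_mul_sq_div_sq (norm_ne_zero_iff.2 (hF' w hw)) (hlt w hw).ne']
    simp only [h, g, Pi.add_apply, Pi.smul_apply, smul_eq_mul]
    ring
  have hexp : Real.exp (u z) = 4 * ‖deriv F z‖ ^ 2 / (1 - ‖F z‖ ^ 2) ^ 2 := by
    have : deriv F z ≠ 0 := hF' z hz
    rw [hu, Real.exp_log (div_pos (by positivity) (pow_pos (hlt z hz) 2))]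
  calc _ = Δ u z := ((hh.1.add hg').congr_of_eventuallyEq hu_eq).laplacian_eq_fderiv_fderiv.symm
    _ = Δ h z + (-2 : ℝ) • Δ g z := by
      rw [(laplacian_congr_nhds hu_eq).eq_of_nhds, hh.1.laplacian_add hg', laplacian_smul _ hg]
    _ = 2 * Real.exp (u z) := by
      rw [hh.2.eq_of_nhds, hFa.laplacian_log_one_sub_norm_sq (hFlt z hz), hexp, Pi.zero_apply,
        smul_eq_mul]
      ring
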